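/- arXiv:2205.04583 — 4 statements merged into one kernel-verified Lean document; each statement's English description precedes it below -/
import Mathlib

section
/- Consider f(x) = (1/2)f_1(x) + (1/2)f_2(x) with f_1(x) = (a_1/2)(x−1)², f_2(x) = (a_2/2)(x+1)², a_1, a_2 > 0, a_1 ≠ a_2, x ∈ ℝ. For the stochastic Polyak update with scaling c_k > 0, the quantity γ_k(x)∇f_i(x) computed with f_i (where γ_k(x) = (f_i(x) − f_i*)/(c_k ‖∇f_i(x)‖²) and f_i* = 0) equals (x−1)/(2c_k) when i = 1 and (x+1)/(2c_k) when i = 2; hence the expected update over uniform i ∈ {1,2} equals x/(2c_k), whose unique fixed point x satisfying x − x/(2c_k) = x is x = 0, which differs from the minimizer x* = (a_1 − a_2)/(a_1 + a_2) of f. -/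
/-- One-dimensional SPS counterexample: with `f₁(x) = (a₁/2)(x−1)²`,
`f₂(x) = (a₂/2)(x+1)²`, `f = (1/2)f₁ + (1/2)f₂`, the SPS update
`γ(x)∇f_i(x)` with `γ(x) = (f_i(x) − f_i*)/(c‖∇f_i(x)‖²)`, `f_i* = 0`, equals
`(x−1)/(2c)` for `i = 1` and `(x+1)/(2c)` for `i = 2`; the expected update over
uniform `i ∈ {1,2}` is `x/(2c)`, whose unique fixed point (of `x ↦ x − x/(2c)`)
is `x = 0`, which differs from the minimizer `x* = (a₁−a₂)/(a₁+a₂)` of `f`. -/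
theorem stmt4 (a1 a2 c : ℝ) (ha1 : 0 < a1) (ha2 : 0 < a2) (hne : a1 ≠ a2) (hc : 0 < c) :
    (∀ x : ℝ, (a1 / 2 * (x - 1) ^ 2 - 0) / (c * ‖a1 * (x - 1)‖ ^ 2) * (a1 * (x - 1))
        = (x - 1) / (2 * c)) ∧
    (∀ x : ℝ, (a2 / 2 * (x + 1) ^ 2 - 0) / (c * ‖a2 * (x + 1)‖ ^ 2) * (a2 * (x + 1))
        = (x + 1) / (2 * c)) ∧
    (∀ x : ℝ, (1 / 2) * ((x - 1) / (2 * c)) + (1 / 2) * ((x + 1) / (2 * c)) = x / (2 * c)) ∧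
    (∀ x : ℝ, x - x / (2 * c) = x ↔ x = 0) ∧
    (∀ x : ℝ, (1 / 2) * (a1 / 2 * ((a1 - a2) / (a1 + a2) - 1) ^ 2)
        + (1 / 2) * (a2 / 2 * ((a1 - a2) / (a1 + a2) + 1) ^ 2)
        ≤ (1 / 2) * (a1 / 2 * (x - 1) ^ 2) + (1 / 2) * (a2 / 2 * (x + 1) ^ 2)) ∧
    (0 : ℝ) ≠ (a1 - a2) / (a1 + a2) := by
  have hc' : c ≠ 0 := hc.ne'
  have hs : a1 + a2 ≠ 0 := by positivity
  refine ⟨?_, ?_, ?_, ?_, ?_, ?_⟩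
  · intro x
    rcases eq_or_ne x 1 with h | h
    · simp [h]
    · have hx : x - 1 ≠ 0 := sub_ne_zero.mpr h
      rw [Real.norm_eq_abs, sq_abs]
      field_simp
      ring
  · intro x
    rcases eq_or_ne x (-1) with h | h
    · simp [h]
    · have hx : x + 1 ≠ 0 := by intro h0; exact h (by linarith)
      rw [Real.norm_eq_abs, sq_abs]
      field_simp
      ring
  · intro x; field_simp; ring
  · intro x
    constructor
    · intro h
      have : x / (2 * c) = 0 := by linarith
      have := (div_eq_zero_iff.mp this)
      rcases this with h | h
      · exact h
      · exact absurd h (by positivity)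
    · intro h; simp [h]
  · intro x
    have key : (1 / 2) * (a1 / 2 * (x - 1) ^ 2) + (1 / 2) * (a2 / 2 * (x + 1) ^ 2)
        - ((1 / 2) * (a1 / 2 * ((a1 - a2) / (a1 + a2) - 1) ^ 2)
        + (1 / 2) * (a2 / 2 * ((a1 - a2) / (a1 + a2) + 1) ^ 2))
        = (a1 + a2) / 4 * (x - (a1 - a2) / (a1 + a2)) ^ 2 := by
      field_simp
      ring
    nlinarith [mul_nonneg (by positivity : (0:ℝ) ≤ (a1 + a2) / 4) (sq_nonneg (x - (a1 - a2) / (a1 + a2)))]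
  · intro h
    have : a1 - a2 = 0 := by
      by_contra h0
      exact h0 (by
        have := h
        field_simp at this
        linarith)
    exact hne (by linarith)
end

section
/- Let f_i(x) = (a_i/2)(x − x_i*)² for i = 1,…,n with a_i > 0, x ∈ ℝ. Consider the recursion x^{k+1} = x^k − (x^k − x_{i_k}*)/(2c_k) where c_k = (k+1)/2 and i_k is sampled uniformly and independently from {1,…,n}. Set x̃ = (1/n)Σ_{i=1}^n x_i*. Then E|x^{k+1} − x̃|² = E_i|x_i* − x̃|²/(k+1), where E_i|x_i* − x̃|² = (1/n)Σ_{i=1}^n (x_i* − x̃)². -/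
open MeasureTheory ProbabilityTheory

/-- SPS bias rate for 1-d quadratics: under the recursion
`x^{k+1} = x^k − (x^k − x*_{i_k})/(2c_k)` with `c_k = (k+1)/2` and `i_k` i.i.d.
uniform on `{1,…,n}`, one has `E|x^{k+1} − x̃|² = E_i|x*_i − x̃|²/(k+1)` where
`x̃ = (1/n)Σ_i x*_i`. -/
theorem stmt5 {Ω : Type*} [MeasurableSpace Ω] (P : Measure Ω) [IsProbabilityMeasure P]
    (n : ℕ) (hn : 0 < n) (xs : Fin n → ℝ)
    (idx : ℕ → Ω → Fin n)
    (hmeas : ∀ k, Measurable (idx k))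
    (hindep : iIndepFun idx P)
    (hunif : ∀ (k : ℕ) (j : Fin n), P {ω | idx k ω = j} = (n : ENNReal)⁻¹)
    (x0 : ℝ) (X : ℕ → Ω → ℝ)
    (hX0 : ∀ ω, X 0 ω = x0)
    (hXrec : ∀ (k : ℕ) (ω : Ω),
      X (k + 1) ω = X k ω - (X k ω - xs (idx k ω)) / (2 * (((k : ℝ) + 1) / 2)))
    (xt : ℝ) (hxt : xt = (∑ i, xs i) / n) :
    ∀ k : ℕ, ∫ ω, |X (k + 1) ω - xt| ^ 2 ∂P =
      ((∑ i, (xs i - xt) ^ 2) / n) / ((k : ℝ) + 1) := by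
  have hn' : (n : ℝ) ≠ 0 := Nat.cast_ne_zero.mpr hn.ne'
  set Y : ℕ → Ω → ℝ := fun j ω => xs (idx j ω) - xt with hY
  -- closed form for the iterates
  have key : ∀ k : ℕ, ∀ ω, X (k + 1) ω - xt =
      (∑ j ∈ Finset.range (k + 1), Y j ω) / ((k : ℝ) + 1) := by
    intro k
    induction k with
    | zero =>
      intro ω
      have h := hXrec 0 ω
      norm_num at h
      simp [h, hY]
    | succ k ih =>
      intro ω
      have h := hXrec (k + 1) ω
      have hk1 : ((k : ℝ) + 1) ≠ 0 := by positivity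
      have hk2 : ((k : ℝ) + 1 + 1) ≠ 0 := by positivity
      have ihω := ih ω
      rw [Finset.sum_range_succ]
      push_cast at h ⊢
      have hYv : Y (k + 1) ω = xs (idx (k + 1) ω) - xt := rfl
      field_simp at h ihω ⊢
      linarith [ihω, h, hYv]
  -- pushforward integral of a function of one index
  have hpush : ∀ (j : ℕ) (g : Fin n → ℝ),
      ∫ ω, g (idx j ω) ∂P = (∑ i, g i) / n := by
    intro j g
    rw [← integral_map (hmeas j).aemeasurable
      (measurable_of_countable g).aestronglyMeasurable]
    rw [integral_fintype .of_finite]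
    have hsing : ∀ i : Fin n, (P.map (idx j)) {i} = (n : ENNReal)⁻¹ := by
      intro i
      rw [Measure.map_apply (hmeas j) (measurableSet_singleton i)]
      exact hunif j i
    simp only [measureReal_def, hsing, smul_eq_mul]
    rw [← Finset.mul_sum, ENNReal.toReal_inv, ENNReal.toReal_natCast, inv_mul_eq_div]
  have hmean : ∀ j : ℕ, ∫ ω, Y j ω ∂P = 0 := by
    intro j
    have := hpush j (fun i => xs i - xt)
    rw [hY]
    rw [this, Finset.sum_sub_distrib, Finset.sum_const, Finset.card_univ, Fintype.card_fin]
    rw [hxt]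
    field_simp
    rw [nsmul_eq_mul, mul_div_cancel₀ _ hn', sub_self, mul_zero]
  have hYmeas : ∀ j : ℕ, Measurable (Y j) :=
    fun j => (measurable_of_countable (fun i => xs i - xt)).comp (hmeas j)
  -- integrability of products
  have hint : ∀ j l : ℕ, Integrable (fun ω => Y j ω * Y l ω) P := by
    intro j l
    have hZ : Measurable (fun ω => (idx j ω, idx l ω)) := (hmeas j).prodMk (hmeas l)
    have : Integrable (fun p : Fin n × Fin n => (xs p.1 - xt) * (xs p.2 - xt))
        (P.map (fun ω => (idx j ω, idx l ω))) := .of_finite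
    exact (integrable_map_measure
      (measurable_of_countable _).aestronglyMeasurable hZ.aemeasurable).mp this
  -- value of the product integrals
  have hdiag : ∀ j : ℕ, ∫ ω, Y j ω * Y j ω ∂P = (∑ i, (xs i - xt) ^ 2) / n := by
    intro j
    have := hpush j (fun i => (xs i - xt) ^ 2)
    rw [← this]
    congr 1
    ext ω
    rw [hY]; ring
  have hoff : ∀ j l : ℕ, j ≠ l → ∫ ω, Y j ω * Y l ω ∂P = 0 := by
    intro j l hjl
    have hind : IndepFun (Y j) (Y l) P :=
      (hindep.indepFun hjl).comp (measurable_of_countable (fun i => xs i - xt))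
        (measurable_of_countable (fun i => xs i - xt))
    have := hind.integral_mul_eq_mul_integral (hYmeas j).aestronglyMeasurable (hYmeas l).aestronglyMeasurable
    calc ∫ ω, Y j ω * Y l ω ∂P = ∫ ω, (Y j * Y l) ω ∂P := rfl
      _ = (∫ ω, Y j ω ∂P) * ∫ ω, Y l ω ∂P := this
      _ = 0 := by rw [hmean j, hmean l, mul_zero]
  intro k
  have hk1 : ((k : ℝ) + 1) ≠ 0 := by positivity
  have h1 : ∀ ω, |X (k + 1) ω - xt| ^ 2 =
      (∑ j ∈ Finset.range (k + 1), ∑ l ∈ Finset.range (k + 1), Y j ω * Y l ω)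
        / (((k : ℝ) + 1) ^ 2) := by
    intro ω
    rw [sq_abs, key k ω, div_pow, sq]
    rw [Finset.sum_mul_sum]
  calc ∫ ω, |X (k + 1) ω - xt| ^ 2 ∂P
      = ∫ ω, (∑ j ∈ Finset.range (k + 1), ∑ l ∈ Finset.range (k + 1), Y j ω * Y l ω)
          / (((k : ℝ) + 1) ^ 2) ∂P := by
        exact integral_congr_ae (Filter.Eventually.of_forall h1)
    _ = (∫ ω, ∑ j ∈ Finset.range (k + 1), ∑ l ∈ Finset.range (k + 1), Y j ω * Y l ω ∂P)
          / (((k : ℝ) + 1) ^ 2) := integral_div _ _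
    _ = (∑ j ∈ Finset.range (k + 1), ∑ l ∈ Finset.range (k + 1), ∫ ω, Y j ω * Y l ω ∂P)
          / (((k : ℝ) + 1) ^ 2) := by
        rw [integral_finset_sum _ (fun j _ => integrable_finset_sum _ (fun l _ => hint j l))]
        congr 1
        exact Finset.sum_congr rfl fun j _ => integral_finset_sum _ (fun l _ => hint j l)
    _ = (((k : ℝ) + 1) * ((∑ i, (xs i - xt) ^ 2) / n)) / (((k : ℝ) + 1) ^ 2) := by
        congr 1
        have : ∀ j ∈ Finset.range (k + 1),
            ∑ l ∈ Finset.range (k + 1), ∫ ω, Y j ω * Y l ω ∂P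
              = (∑ i, (xs i - xt) ^ 2) / n := by
          intro j hj
          rw [Finset.sum_eq_single j (fun l _ hlj => hoff j l (Ne.symm hlj))
            (fun h => absurd hj h)]
          exact hdiag j
        rw [Finset.sum_congr rfl this, Finset.sum_const, Finset.card_range]
        push_cast
        ring
    _ = ((∑ i, (xs i - xt) ^ 2) / n) / ((k : ℝ) + 1) := by
        field_simp
end

section
/- Let each f_i : ℝ^d → ℝ be convex and L_i-smooth with L_max = max_i L_i, let ℓ_S* ≤ inf_x f_S(x) for each minibatch function f_S, and let (c_k) be a non-decreasing positive sequence. Define γ_{-1} = γ_b > 0, c_{-1} = c_0, and γ_k = (1/c_k) min{ (f_{S_k}(x^k) − ℓ_{S_k}*)/‖∇f_{S_k}(x^k)‖², c_{k-1} γ_{k-1} }. Then for all k ≥ 0: min{1/(2 c_k L_max), c_0 γ_b / c_k} ≤ γ_k ≤ c_0 γ_b / c_k, and c_k γ_k ≤ c_{k-1} γ_{k-1} (i.e., the stepsizes are non-increasing in the appropriate sense). -/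
local notation "⟪" x ", " y "⟫R" => @inner ℝ _ _ x y

lemma descent_lemma {E : Type*} [NormedAddCommGroup E] [InnerProductSpace ℝ E]
    [CompleteSpace E]
    (f : E → ℝ) (g : E → E) (L : ℝ) (hL : 0 < L)
    (hg : ∀ z, HasGradientAt f (g z) z)
    (hlip : ∀ z w, ‖g z - g w‖ ≤ L * ‖z - w‖) (x y : E) :
    f y ≤ f x + ⟪g x, y - x⟫R + L / 2 * ‖y - x‖ ^ 2 := by
  set v := y - x with hv
  set φ : ℝ → ℝ := fun t => L / 2 * ‖v‖ ^ 2 * t ^ 2 + (f x + ⟪g x, v⟫R * t) - f (x + t • v)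
    with hφ
  have hc : ∀ t : ℝ, HasDerivAt (fun s : ℝ => x + s • v) v t := by
    intro t
    simpa using ((hasDerivAt_id t).smul_const v).const_add x
  have hψ : ∀ t : ℝ, HasDerivAt (fun s : ℝ => f (x + s • v)) ⟪g (x + t • v), v⟫R t := by
    intro t
    have := ((hg (x + t • v)).hasFDerivAt).comp_hasDerivAt t (hc t)
    simpa [InnerProductSpace.toDual_apply_apply, Function.comp_def] using this
  have hφ' : ∀ t : ℝ, HasDerivAt φ
      (L * ‖v‖ ^ 2 * t + ⟪g x, v⟫R - ⟪g (x + t • v), v⟫R) t := by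
    intro t
    have h1 : HasDerivAt (fun t : ℝ => L / 2 * ‖v‖ ^ 2 * t ^ 2) (L * ‖v‖ ^ 2 * t) t := by
      have := (hasDerivAt_pow 2 t).const_mul (L / 2 * ‖v‖ ^ 2)
      refine this.congr_deriv ?_
      ring
    have h2 : HasDerivAt (fun t : ℝ => f x + ⟪g x, v⟫R * t) ⟪g x, v⟫R t := by
      simpa using ((hasDerivAt_id t).const_mul ⟪g x, v⟫R).const_add (f x)
    exact (h1.add h2).sub (hψ t)
  have hmono : MonotoneOn φ (Set.Icc (0:ℝ) 1) := by
    apply monotoneOn_of_deriv_nonneg (convex_Icc 0 1)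
    · exact (fun t _ => ((hφ' t).continuousAt.continuousWithinAt))
    · intro t ht
      exact ((hφ' t).differentiableAt).differentiableWithinAt
    · intro t ht
      rw [interior_Icc] at ht
      rw [(hφ' t).deriv]
      have hbound : ⟪g (x + t • v), v⟫R - ⟪g x, v⟫R ≤ L * ‖v‖ ^ 2 * t := by
        have h1 : ⟪g (x + t • v) - g x, v⟫R ≤ ‖g (x + t • v) - g x‖ * ‖v‖ :=
          real_inner_le_norm _ _
        have h2 : ‖g (x + t • v) - g x‖ ≤ L * (t * ‖v‖) := by
          have := hlip (x + t • v) x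
          simpa [add_sub_cancel_left, norm_smul, abs_of_pos ht.1] using this
        have h3 : ‖g (x + t • v) - g x‖ * ‖v‖ ≤ L * (t * ‖v‖) * ‖v‖ :=
          mul_le_mul_of_nonneg_right h2 (norm_nonneg v)
        calc ⟪g (x + t • v), v⟫R - ⟪g x, v⟫R = ⟪g (x + t • v) - g x, v⟫R := by
              rw [inner_sub_left]
          _ ≤ L * (t * ‖v‖) * ‖v‖ := le_trans h1 h3
          _ = L * ‖v‖ ^ 2 * t := by ring
      linarith
  have h01 : φ 0 ≤ φ 1 := hmono (by norm_num) (by norm_num) (by norm_num)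
  have e0 : φ 0 = 0 := by simp [hφ]
  have e1 : φ 1 = L / 2 * ‖v‖ ^ 2 + (f x + ⟪g x, v⟫R) - f y := by
    simp [hφ, hv]
  rw [e0, e1] at h01
  linarith

lemma pl_bound {E : Type*} [NormedAddCommGroup E] [InnerProductSpace ℝ E]
    [CompleteSpace E]
    (f : E → ℝ) (g : E → E) (L : ℝ) (hL : 0 < L)
    (hg : ∀ z, HasGradientAt f (g z) z)
    (hlip : ∀ z w, ‖g z - g w‖ ≤ L * ‖z - w‖)
    (ℓ : ℝ) (hℓ : ∀ z, ℓ ≤ f z) (x : E) (hx : g x ≠ 0) :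
    1 / (2 * L) ≤ (f x - ℓ) / ‖g x‖ ^ 2 := by
  have key := descent_lemma f g L hL hg hlip x (x - (L⁻¹) • g x)
  have hv : x - (L⁻¹) • g x - x = -(L⁻¹ • g x) := by abel
  rw [hv] at key
  have hin : ⟪g x, -(L⁻¹ • g x)⟫R = -(L⁻¹ * ‖g x‖ ^ 2) := by
    rw [inner_neg_right, real_inner_smul_right, real_inner_self_eq_norm_sq]
  have hnv : ‖-(L⁻¹ • g x)‖ ^ 2 = L⁻¹ ^ 2 * ‖g x‖ ^ 2 := by
    rw [norm_neg, norm_smul]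
    simp [abs_of_pos (inv_pos.mpr hL), mul_pow]
  rw [hin, hnv] at key
  have hle : ℓ ≤ f (x - (L⁻¹) • g x) := hℓ _
  have hgpos : (0:ℝ) < ‖g x‖ ^ 2 := pow_pos (norm_pos_iff.mpr hx) 2
  rw [le_div_iff₀ hgpos]
  have : L / 2 * (L⁻¹ ^ 2 * ‖g x‖ ^ 2) = ‖g x‖ ^ 2 / (2 * L) := by
    field_simp
  rw [this] at key
  have h2 : 1 / (2 * L) * ‖g x‖ ^ 2 = L⁻¹ * ‖g x‖ ^ 2 - ‖g x‖ ^ 2 / (2 * L) := by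
    field_simp; ring
  linarith

/-- DecSPS stepsize bounds (Lemma on sandwich bounds): with each minibatch function
`F k` (the `f_{S_k}`) convex, `L_max`-smooth, lower bounded by `ℓ_k ≤ inf F k`,
non-decreasing positive `(c_k)`, and
`γ_k = (1/c_k) min{(F_k(x^k) − ℓ_k)/‖∇F_k(x^k)‖², c_{k-1} γ_{k-1}}` with
`γ_{-1} = γ_b > 0`, `c_{-1} = c_0`, we have
`min{1/(2c_k L_max), c_0 γ_b/c_k} ≤ γ_k ≤ c_0 γ_b/c_k` and `c_k γ_k` non-increasing. -/
theorem stmt8 {d : ℕ}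
    (F : ℕ → EuclideanSpace ℝ (Fin d) → ℝ)
    (G : ℕ → EuclideanSpace ℝ (Fin d) → EuclideanSpace ℝ (Fin d))
    (Lmax : ℝ) (hL : 0 < Lmax)
    (hgrad : ∀ k x, HasGradientAt (F k) (G k x) x)
    (hconv : ∀ k, ConvexOn ℝ Set.univ (F k))
    (hsmooth : ∀ k x y, ‖G k x - G k y‖ ≤ Lmax * ‖x - y‖)
    (l : ℕ → ℝ) (hl : ∀ k x, l k ≤ F k x)
    (x : ℕ → EuclideanSpace ℝ (Fin d))
    (hgz : ∀ k, G k (x k) ≠ 0)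
    (c : ℕ → ℝ) (hcpos : ∀ k, 0 < c k) (hcmono : ∀ k, c k ≤ c (k + 1))
    (γb : ℝ) (hγb : 0 < γb)
    (γ : ℕ → ℝ)
    (hγ0 : γ 0 = (1 / c 0) *
      min ((F 0 (x 0) - l 0) / ‖G 0 (x 0)‖ ^ 2) (c 0 * γb))
    (hγrec : ∀ k, γ (k + 1) = (1 / c (k + 1)) *
      min ((F (k + 1) (x (k + 1)) - l (k + 1)) / ‖G (k + 1) (x (k + 1))‖ ^ 2) (c k * γ k)) :
    ∀ k, min (1 / (2 * c k * Lmax)) (c 0 * γb / c k) ≤ γ k ∧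
      γ k ≤ c 0 * γb / c k ∧ c (k + 1) * γ (k + 1) ≤ c k * γ k := by
  have hr : ∀ k, 1 / (2 * Lmax) ≤ (F k (x k) - l k) / ‖G k (x k)‖ ^ 2 := fun k =>
    pl_bound (F k) (G k) Lmax hL (fun z => hgrad k z) (hsmooth k) (l k) (hl k) (x k) (hgz k)
  have hprod : ∀ k, c k * γ k =
      min ((F k (x k) - l k) / ‖G k (x k)‖ ^ 2)
        (if h : k = 0 then c 0 * γb else c (k-1) * γ (k-1)) := by
    intro k
    cases k with
    | zero =>
      simp only [dif_pos rfl]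
      rw [hγ0, one_div, ← mul_assoc, mul_inv_cancel₀ (hcpos 0).ne', one_mul]
      simp
    | succ n =>
      simp only [Nat.succ_ne_zero, dif_neg, Nat.add_sub_cancel]
      rw [hγrec n, one_div, ← mul_assoc, mul_inv_cancel₀ (hcpos (n+1)).ne', one_mul]
      simp
  have hmin : ∀ k, min (1 / (2 * Lmax)) (c 0 * γb) ≤ c k * γ k ∧ c k * γ k ≤ c 0 * γb := by
    intro k
    induction k with
    | zero =>
      rw [hprod 0]; simp only [dif_pos rfl]
      exact ⟨min_le_min (hr 0) le_rfl, min_le_right _ _⟩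
    | succ n ih =>
      rw [hprod (n+1)]
      simp only [Nat.succ_ne_zero, dif_neg, Nat.add_sub_cancel]
      exact ⟨le_min (le_trans (min_le_left _ _) (hr (n+1))) ih.1,
        le_trans (min_le_right _ _) ih.2⟩
  intro k
  have hck := hcpos k
  refine ⟨?_, ?_, ?_⟩
  · have heq : min (1 / (2 * c k * Lmax)) (c 0 * γb / c k)
        = min (1 / (2 * Lmax)) (c 0 * γb) / c k := by
      rw [← min_div_div_right hck.le]
      congr 1
      field_simp
    rw [heq, div_le_iff₀ hck]
    have := (hmin k).1
    linarith [(hmin k).1]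
  · rw [le_div_iff₀ hck]
    linarith [(hmin k).2]
  · have h1 : c (k+1) * γ (k+1) =
        min ((F (k+1) (x (k+1)) - l (k+1)) / ‖G (k+1) (x (k+1))‖ ^ 2) (c k * γ k) := by
      rw [hγrec k, one_div, ← mul_assoc, mul_inv_cancel₀ (hcpos (k+1)).ne', one_mul]
    rw [h1]
    exact min_le_right _ _
end

section
/- Let each f_i be μ_i-strongly convex and L_i-smooth, μ_min = min_i μ_i, L_max = max_i L_i. Under DecSPS with c_k = √(k+1), the iterates satisfy ‖x^{k+1} − x*‖² ≤ (1 − μ_min γ_k)‖x^k − x*‖² + (2 c_0 γ_b / c_k)(f_{S_k}(x*) − ℓ_{S_k}*) for every k, where γ_k ∈ [min{1/(2c_k L_max), c_0γ_b/c_k}, c_0γ_b/c_k]. -/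
lemma descent_aux {E : Type*} [NormedAddCommGroup E] [InnerProductSpace ℝ E] [CompleteSpace E]
    (f : E → ℝ) (g : E → E) (L : ℝ) (hL : 0 ≤ L)
    (hg : ∀ z, HasGradientAt f (g z) z)
    (hlip : ∀ z w, ‖g z - g w‖ ≤ L * ‖z - w‖)
    (x y : E) :
    f y ≤ f x + inner ℝ (g x) (y - x) + L / 2 * ‖y - x‖ ^ 2 := by
  set v := y - x with hv
  have hgcont : Continuous g := by
    refine (LipschitzWith.of_dist_le_mul (K := L.toNNReal) (fun z w => ?_)).continuous
    simpa [dist_eq_norm, Real.coe_toNNReal L hL] using hlip z w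
  have hderiv : ∀ t : ℝ, HasDerivAt (fun t : ℝ => f (x + t • v))
      (inner ℝ (g (x + t • v)) v) t := by
    intro t
    have h1 : HasDerivAt (fun t : ℝ => x + t • v) v t := by
      simpa using ((hasDerivAt_id t).smul_const v).const_add x
    have h2 := ((hg (x + t • v)).hasFDerivAt).comp_hasDerivAt t h1
    exact h2
  have hcont : Continuous fun t : ℝ => (inner ℝ (g (x + t • v)) v : ℝ) := by
    exact (hgcont.comp (by continuity)).inner continuous_const
  have key : f (x + (1:ℝ) • v) - f (x + (0:ℝ) • v)
      = ∫ t in (0:ℝ)..1, (inner ℝ (g (x + t • v)) v : ℝ) :=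
    (intervalIntegral.integral_eq_sub_of_hasDerivAt (fun t _ => hderiv t)
      (hcont.intervalIntegrable 0 1)).symm
  have hbound : (∫ t in (0:ℝ)..1, (inner ℝ (g (x + t • v)) v : ℝ))
      ≤ ∫ t in (0:ℝ)..1, ((inner ℝ (g x) v : ℝ) + (L * ‖v‖ ^ 2) * t) := by
    refine intervalIntegral.integral_mono_on (by norm_num)
      (hcont.intervalIntegrable 0 1)
      ((continuous_const.add (continuous_const.mul continuous_id)).intervalIntegrable 0 1)
      (fun t ht => ?_)
    obtain ⟨ht0, ht1⟩ := ht
    have h1 : (inner ℝ (g (x + t • v)) v : ℝ)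
        = inner ℝ (g x) v + inner ℝ (g (x + t • v) - g x) v := by
      rw [inner_sub_left]; ring
    have h2 : (inner ℝ (g (x + t • v) - g x) v : ℝ) ≤ ‖g (x + t • v) - g x‖ * ‖v‖ :=
      real_inner_le_norm _ _
    have h3 : ‖g (x + t • v) - g x‖ ≤ L * (t * ‖v‖) := by
      have := hlip (x + t • v) x
      simpa [norm_smul, abs_of_nonneg ht0, mul_assoc] using this
    have h4 : ‖g (x + t • v) - g x‖ * ‖v‖ ≤ L * (t * ‖v‖) * ‖v‖ :=
      mul_le_mul_of_nonneg_right h3 (norm_nonneg v)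
    rw [h1]
    nlinarith [norm_nonneg v]
  have hval : (∫ t in (0:ℝ)..1, ((inner ℝ (g x) v : ℝ) + (L * ‖v‖ ^ 2) * t))
      = inner ℝ (g x) v + L / 2 * ‖v‖ ^ 2 := by
    rw [intervalIntegral.integral_add (intervalIntegrable_const)
      ((intervalIntegral.intervalIntegrable_id).const_mul _),
      intervalIntegral.integral_const, intervalIntegral.integral_const_mul, integral_id]
    simp
    ring
  simp only [one_smul, zero_smul, add_zero] at key
  rw [hval, ← key] at hbound
  have hxy : x + v = y := by rw [hv]; abel
  rw [hxy] at hbound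
  linarith


/-- One-step DecSPS contraction under strong convexity: with each minibatch
function `F k` `μ_min`-strongly convex and `L_max`-smooth, lower bounds
`ℓ_k ≤ inf F k`, `c_k = √(k+1)` and DecSPS stepsizes, the iterates satisfy
`‖x^{k+1} − x*‖² ≤ (1 − μ_min γ_k)‖x^k − x*‖² + (2c_0γ_b/c_k)(F_k(x*) − ℓ_k)`,
where `γ_k ∈ [min{1/(2c_k L_max), c_0γ_b/c_k}, c_0γ_b/c_k]`. -/
theorem stmt12 {d : ℕ}
    (F : ℕ → EuclideanSpace ℝ (Fin d) → ℝ)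
    (G : ℕ → EuclideanSpace ℝ (Fin d) → EuclideanSpace ℝ (Fin d))
    (μmin Lmax : ℝ) (hμ : 0 < μmin) (hL : 0 < Lmax)
    (hgrad : ∀ k x, HasGradientAt (F k) (G k x) x)
    (hsc : ∀ k x y, F k x ≥ F k y + inner ℝ (G k y) (x - y) + μmin / 2 * ‖x - y‖ ^ 2)
    (hsmooth : ∀ k x y, ‖G k x - G k y‖ ≤ Lmax * ‖x - y‖)
    (l : ℕ → ℝ) (hl : ∀ k x, l k ≤ F k x)
    (c : ℕ → ℝ) (hc : ∀ k : ℕ, c k = Real.sqrt (k + 1))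
    (γb : ℝ) (hγb : 0 < γb)
    (x : ℕ → EuclideanSpace ℝ (Fin d)) (γ : ℕ → ℝ)
    (hgz : ∀ k, G k (x k) ≠ 0)
    (hγ0 : γ 0 = (1 / c 0) *
      min ((F 0 (x 0) - l 0) / ‖G 0 (x 0)‖ ^ 2) (c 0 * γb))
    (hγrec : ∀ k, γ (k + 1) = (1 / c (k + 1)) *
      min ((F (k + 1) (x (k + 1)) - l (k + 1)) / ‖G (k + 1) (x (k + 1))‖ ^ 2) (c k * γ k))
    (hxrec : ∀ k, x (k + 1) = x k - γ k • G k (x k))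
    (xstar : EuclideanSpace ℝ (Fin d)) :
    ∀ k, (min (1 / (2 * c k * Lmax)) (c 0 * γb / c k) ≤ γ k ∧ γ k ≤ c 0 * γb / c k) ∧
      ‖x (k + 1) - xstar‖ ^ 2 ≤
        (1 - μmin * γ k) * ‖x k - xstar‖ ^ 2 + (2 * c 0 * γb / c k) * (F k xstar - l k) := by
  have hc0 : c 0 = 1 := by rw [hc]; norm_num
  have hc1 : ∀ k, 1 ≤ c k := by
    intro k; rw [hc]
    nlinarith [Real.sq_sqrt (show (0:ℝ) ≤ (k:ℝ) + 1 by positivity),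
      Real.sqrt_nonneg ((k:ℝ) + 1), Nat.cast_nonneg (α := ℝ) k]
  have hcpos : ∀ k, 0 < c k := fun k => lt_of_lt_of_le one_pos (hc1 k)
  have hgn : ∀ k, 0 < ‖G k (x k)‖ ^ 2 := fun k => pow_pos (norm_pos_iff.2 (hgz k)) 2
  have h2L : (0:ℝ) < 2 * Lmax := by positivity
  -- SPS lower bound via descent lemma
  have hsps : ∀ k, 1 / (2 * Lmax) ≤ (F k (x k) - l k) / ‖G k (x k)‖ ^ 2 := by
    intro k
    set g0 := G k (x k) with hg0
    have hdes := descent_aux (F k) (G k) Lmax (le_of_lt hL) (hgrad k) (hsmooth k)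
      (x k) (x k - Lmax⁻¹ • g0)
    have hdiff : x k - Lmax⁻¹ • g0 - x k = -(Lmax⁻¹ • g0) := by abel
    rw [hdiff] at hdes
    have hip : (inner ℝ g0 (-(Lmax⁻¹ • g0)) : ℝ) = -(Lmax⁻¹ * ‖g0‖ ^ 2) := by
      rw [inner_neg_right, real_inner_smul_right, real_inner_self_eq_norm_sq]
    have hnn : ‖-(Lmax⁻¹ • g0)‖ ^ 2 = Lmax⁻¹ ^ 2 * ‖g0‖ ^ 2 := by
      rw [norm_neg, norm_smul, mul_pow, Real.norm_eq_abs, sq_abs]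
    rw [hip, hnn] at hdes
    have hlow := hl k (x k - Lmax⁻¹ • g0)
    have e2 : Lmax / 2 * (Lmax⁻¹ ^ 2 * ‖g0‖ ^ 2) = Lmax⁻¹ * ‖g0‖ ^ 2 / 2 := by
      field_simp
    have h7 : Lmax⁻¹ * ‖g0‖ ^ 2 / 2 ≤ F k (x k) - l k := by linarith
    have h8 := mul_le_mul_of_nonneg_right h7 (le_of_lt h2L)
    have e3 : Lmax⁻¹ * ‖g0‖ ^ 2 / 2 * (2 * Lmax) = ‖g0‖ ^ 2 := by
      rw [show Lmax⁻¹ * ‖g0‖ ^ 2 / 2 * (2 * Lmax) = (Lmax⁻¹ * Lmax) * ‖g0‖ ^ 2 by ring,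
        inv_mul_cancel₀ (ne_of_gt hL), one_mul]
    rw [e3] at h8
    rw [div_le_div_iff₀ h2L (hgn k), one_mul]
    exact h8
  -- step size bounds (with c 0 = 1 version)
  have hbnd : ∀ k, min (1 / (2 * c k * Lmax)) (γb / c k) ≤ γ k ∧ γ k ≤ γb / c k := by
    intro k
    have emin : ∀ m : ℕ, min (1 / (2 * c m * Lmax)) (γb / c m)
        = min (1 / (2 * Lmax)) γb / c m := by
      intro m
      rw [← min_div_div_right (le_of_lt (hcpos m))]
      congr 1
      field_simp
    induction k with
    | zero =>
      have e0 : γ 0 = min ((F 0 (x 0) - l 0) / ‖G 0 (x 0)‖ ^ 2) γb := by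
        rw [hγ0, hc0]; norm_num
      refine ⟨?_, ?_⟩
      · rw [e0, emin 0, hc0, div_one]
        exact le_min ((min_le_left _ _).trans (hsps 0)) (min_le_right _ _)
      · rw [e0, hc0, div_one]
        exact min_le_right _ _
    | succ n ih =>
      obtain ⟨ihl, ihu⟩ := ih
      have hcpn := hcpos n
      have hcpn1 := hcpos (n + 1)
      rw [emin n, div_le_iff₀ hcpn] at ihl
      have hlow : min (1 / (2 * Lmax)) γb ≤
          min ((F (n+1) (x (n+1)) - l (n+1)) / ‖G (n+1) (x (n+1))‖ ^ 2) (c n * γ n) := by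
        refine le_min ((min_le_left _ _).trans (hsps (n+1))) ?_
        calc min (1 / (2 * Lmax)) γb ≤ γ n * c n := ihl
          _ = c n * γ n := mul_comm _ _
      have hup : min ((F (n+1) (x (n+1)) - l (n+1)) / ‖G (n+1) (x (n+1))‖ ^ 2) (c n * γ n)
          ≤ γb := by
        refine (min_le_right _ _).trans ?_
        calc c n * γ n ≤ c n * (γb / c n) := mul_le_mul_of_nonneg_left ihu (le_of_lt hcpn)
          _ = γb := by field_simp
      constructor
      · rw [hγrec n, emin (n+1),
          show (1 / c (n+1)) * min ((F (n+1) (x (n+1)) - l (n+1)) / ‖G (n+1) (x (n+1))‖ ^ 2)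
            (c n * γ n) = min ((F (n+1) (x (n+1)) - l (n+1)) / ‖G (n+1) (x (n+1))‖ ^ 2)
            (c n * γ n) / c (n+1) by ring]
        gcongr
      · rw [hγrec n]
        calc (1 / c (n+1)) * min _ (c n * γ n) ≤ (1 / c (n+1)) * γb :=
              mul_le_mul_of_nonneg_left hup (by positivity)
          _ = γb / c (n+1) := by ring
  -- positivity of γ
  have hγpos : ∀ k, 0 < γ k := fun k =>
    lt_of_lt_of_le (lt_min (div_pos one_pos (mul_pos (mul_pos two_pos (hcpos k)) hL))
      (div_pos hγb (hcpos k))) (hbnd k).1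
  -- γ k * c k * ‖G‖² ≤ F k (x k) - l k
  have hγle : ∀ k, γ k * c k * ‖G k (x k)‖ ^ 2 ≤ F k (x k) - l k := by
    intro k
    have h : γ k ≤ (1 / c k) * ((F k (x k) - l k) / ‖G k (x k)‖ ^ 2) := by
      cases k with
      | zero => rw [hγ0]
                exact mul_le_mul_of_nonneg_left (min_le_left _ _)
                  (le_of_lt (div_pos one_pos (hcpos 0)))
      | succ n => rw [hγrec n]
                  exact mul_le_mul_of_nonneg_left (min_le_left _ _)
                    (le_of_lt (div_pos one_pos (hcpos (n+1))))
    have hck := hcpos k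
    have hgk := hgn k
    have h' := mul_le_mul_of_nonneg_right h (le_of_lt (mul_pos hck hgk))
    calc γ k * c k * ‖G k (x k)‖ ^ 2 = γ k * (c k * ‖G k (x k)‖ ^ 2) := by ring
      _ ≤ (1 / c k) * ((F k (x k) - l k) / ‖G k (x k)‖ ^ 2) * (c k * ‖G k (x k)‖ ^ 2) := h'
      _ = F k (x k) - l k := by have := norm_pos_iff.2 (hgz k); field_simp
  intro k
  refine ⟨⟨by rw [hc0, one_mul]; exact (hbnd k).1, by rw [hc0, one_mul]; exact (hbnd k).2⟩, ?_⟩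
  set X := x k with hX
  set g := G k (x k) with hgdef
  set γk := γ k with hγk
  have hexp : ‖x (k+1) - xstar‖ ^ 2
      = ‖X - xstar‖ ^ 2 - 2 * γk * inner ℝ g (X - xstar) + γk ^ 2 * ‖g‖ ^ 2 := by
    rw [hxrec k]
    have e : X - γk • g - xstar = (X - xstar) - γk • g := by abel
    rw [e, @norm_sub_sq_real, real_inner_smul_right, norm_smul, mul_pow,
      Real.norm_eq_abs, sq_abs, real_inner_comm]
    ring
  have hscc := hsc k xstar X
  have hip : F k X - F k xstar + μmin / 2 * ‖X - xstar‖ ^ 2 ≤ inner ℝ g (X - xstar) := by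
    have e1 : (inner ℝ g (xstar - X) : ℝ) = -inner ℝ g (X - xstar) := by
      rw [← inner_neg_right]; congr 1; abel
    have e2 : ‖xstar - X‖ = ‖X - xstar‖ := norm_sub_rev _ _
    rw [e1, e2] at hscc
    linarith
  have hγ : (0:ℝ) ≤ γk := (hγpos k).le
  have h3 : γk ^ 2 * ‖g‖ ^ 2 ≤ γk * (F k X - l k) := by
    have h := mul_le_mul_of_nonneg_left (hγle k) hγ
    nlinarith [mul_nonneg (mul_nonneg (mul_nonneg hγ hγ) (hgn k).le)
      (sub_nonneg.mpr (hc1 k)), hgn k]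
  have h4 : γk * (F k xstar - l k) ≤ (γb / c k) * (F k xstar - l k) :=
    mul_le_mul_of_nonneg_right (hbnd k).2 (sub_nonneg.mpr (hl k xstar))
  have h5 : (0:ℝ) ≤ F k X - l k := sub_nonneg.mpr (hl k X)
  have hμγ := mul_le_mul_of_nonneg_left hip (by positivity : (0:ℝ) ≤ 2 * γk)
  rw [hc0, hexp]
  have key : ‖X - xstar‖ ^ 2 - 2 * γk * inner ℝ g (X - xstar) + γk ^ 2 * ‖g‖ ^ 2
      ≤ (1 - μmin * γk) * ‖X - xstar‖ ^ 2 + 2 * (γk * (F k xstar - l k)) := by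
    linarith [hμγ, h3, mul_nonneg hγ h5]
  have e : (1 - μmin * γk) * ‖X - xstar‖ ^ 2 + 2 * 1 * γb / c k * (F k xstar - l k)
      = (1 - μmin * γk) * ‖X - xstar‖ ^ 2 + 2 * (γb / c k * (F k xstar - l k)) := by
    ring
  rw [e]
  linarith [key, h4]
end
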